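/- arXiv:2301.13239 — 2 statements merged into one kernel-verified Lean document; each statement's English description precedes it below -/
import Mathlib

section
/- Let r_1, r_2 ≥ 1 and 0 < a < r_2, 0 < b < r_1, 0 < c < r_1, 0 < d < r_2 be integers such that A_+(z) = [[1+z^{r_1}, -z^a],[-z^b, 1+z^{r_2}]] and A_-(z) = [[1+z^{r_1}-z^c, 0],[0, 1+z^{r_2}-z^d]] satisfy A_+(z)A_-(z^{-1})^T = A_-(z)A_+(z^{-1})^T. Then r_1 = r_2 = a + b = 2c = 2d. -/
/-!
Each of the entries (0,0), (1,1) and (0,1) of the matrix identity, once expanded, equates two sums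
of monomials `T k` with coefficient one. Over `ℤ` such a sum determines the multiset of its
exponents, and comparing single exponents of the two multisets leaves only the stated solution.
-/

open LaurentPolynomial Matrix

namespace LaurentPolynomial

variable {R : Type*} [Semiring R]

theorem coeff_sum_map_T (s : Multiset ℤ) (n : ℤ) :
    ((s.map T).sum : R[T;T⁻¹]).coeff n = s.count n := by
  induction s using Multiset.induction_on with
  | empty => simp
  | cons m s ih =>
    rw [Multiset.map_cons, Multiset.sum_cons, AddMonoidAlgebra.coeff_add, Finsupp.add_apply, ih,
      T_apply, Multiset.count_cons]
    by_cases h : m = n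
    · subst h; simp [add_comm]
    · simp [h, Ne.symm h]

theorem sum_map_T_injective [CharZero R] :
    Function.Injective fun s : Multiset ℤ => ((s.map T).sum : R[T;T⁻¹]) := fun s t h =>
  Multiset.ext.mpr fun n => by
    have hcoeff := congrArg (fun f : R[T;T⁻¹] => f.coeff n) h
    simpa only [coeff_sum_map_T, Nat.cast_inj] using hcoeff

end LaurentPolynomial

theorem eq_two_mul_of_diagonal_identity {r c : ℤ} (hc : 0 < c)
    (h : ((1 + T r) * (1 + T (-r) - T (-c)) : ℤ[T;T⁻¹]) = (1 + T r - T c) * (1 + T (-r))) :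
    r = 2 * c := by
  have hsum : ((({-c, r - c} : Multiset ℤ).map T).sum : ℤ[T;T⁻¹])
      = (({c, c - r} : Multiset ℤ).map T).sum := by
    simp only [Multiset.insert_eq_cons, Multiset.map_cons, Multiset.map_singleton, Multiset.sum_cons,
      Multiset.sum_singleton, T_sub]
    linear_combination -h
  have hmem : -c ∈ ({c, c - r} : Multiset ℤ) := sum_map_T_injective hsum ▸ by simp
  simp only [Multiset.insert_eq_cons, Multiset.mem_cons, Multiset.mem_singleton] at hmem
  omega

theorem eq_add_of_offDiagonal_identity {r₁ r₂ a b c d : ℤ} (har : a < r₂) (hbr : b < r₁)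
    (hd : 0 < d) (hdr : d < r₂)
    (h : (-T a * (1 + T (-r₂) - T (-d)) : ℤ[T;T⁻¹]) = (1 + T r₁ - T c) * -T (-b)) :
    r₁ = a + b ∧ r₂ = a + b := by
  have hsum : ((({a, a - r₂, c - b} : Multiset ℤ).map T).sum : ℤ[T;T⁻¹])
      = (({-b, r₁ - b, a - d} : Multiset ℤ).map T).sum := by
    simp only [Multiset.insert_eq_cons, Multiset.map_cons, Multiset.map_singleton, Multiset.sum_cons,
      Multiset.sum_singleton, T_sub]
    linear_combination -h
  have hmem : a ∈ ({-b, r₁ - b, a - d} : Multiset ℤ) ∧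
      a - r₂ ∈ ({-b, r₁ - b, a - d} : Multiset ℤ) :=
    sum_map_T_injective hsum ▸ by simp
  simp only [Multiset.insert_eq_cons, Multiset.mem_cons, Multiset.mem_singleton] at hmem
  omega

theorem Apm_z_4_general (r₁ r₂ a b c d : ℤ)
    (har : a < r₂) (hbr : b < r₁)
    (hc : 0 < c) (hd : 0 < d) (hdr : d < r₂)
    (hsymp :
      let Ap : Matrix (Fin 2) (Fin 2) (LaurentPolynomial ℤ) :=
        !![1 + T r₁, -T a; -T b, 1 + T r₂]
      let Am : Matrix (Fin 2) (Fin 2) (LaurentPolynomial ℤ) :=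
        !![1 + T r₁ - T c, 0; 0, 1 + T r₂ - T d]
      Ap * (Am.map (invert (R := ℤ)))ᵀ = Am * (Ap.map (invert (R := ℤ)))ᵀ) :
    r₁ = r₂ ∧ r₁ = a + b ∧ r₁ = 2 * c ∧ r₁ = 2 * d := by
  have entry (i j : Fin 2) := congrFun₂ hsymp i j
  have hc₂ := eq_two_mul_of_diagonal_identity hc
    (by simpa [mul_apply, Fin.sum_univ_two] using entry 0 0)
  have hd₂ := eq_two_mul_of_diagonal_identity hd
    (by simpa [mul_apply, Fin.sum_univ_two] using entry 1 1)
  obtain ⟨hab₁, hab₂⟩ := eq_add_of_offDiagonal_identity har hbr hd hdr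
    (by simpa [mul_apply, Fin.sum_univ_two] using entry 0 1)
  omega

theorem Apm_z_4 (r₁ r₂ a b c d : ℤ) (hr₁ : 1 ≤ r₁) (hr₂ : 1 ≤ r₂)
    (ha : 0 < a) (har : a < r₂) (hb : 0 < b) (hbr : b < r₁)
    (hc : 0 < c) (hcr : c < r₁) (hd : 0 < d) (hdr : d < r₂)
    (hsymp :
      let Ap : Matrix (Fin 2) (Fin 2) (LaurentPolynomial ℤ) :=
        !![1 + T r₁, -T a; -T b, 1 + T r₂]
      let Am : Matrix (Fin 2) (Fin 2) (LaurentPolynomial ℤ) :=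
        !![1 + T r₁ - T c, 0; 0, 1 + T r₂ - T d]
      Ap * (Am.map (invert (R := ℤ)))ᵀ = Am * (Ap.map (invert (R := ℤ)))ᵀ) :
    r₁ = r₂ ∧ r₁ = a + b ∧ r₁ = 2 * c ∧ r₁ = 2 * d :=
  Apm_z_4_general r₁ r₂ a b c d har hbr hc hd hdr hsymp
end

section
/- Let r_1, r_2 ≥ 1 and integers a, b_1 ≤ b_2, c with 0 < a < r_2, 0 < b_1, b_2 < r_2, 0 < c < r_1, such that A_+(z) = [[1+z^{r_1}, -z^a],[-z^{b_1}-z^{b_2}, 1+z^{r_2}]] and A_-(z) = [[1+z^{r_1}-z^c, 0],[0, 1+z^{r_2}]] satisfy the symplectic property A_+(z)A_-(z^{-1})^T = A_-(z)A_+(z^{-1})^T. Then r_1 = 2c, r_2 = 3c, b_1 = 2c - a, and b_2 = 3c - a. -/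
/-!
Both sides of the symplectic identity have only monomial entries with coefficients `±1`. Moving
the negative terms across, entries `(0,0)` and `(0,1)` become equalities of sums of monomials
`∑ T eᵢ`, and such sums agree exactly when their exponent multisets do. Comparing the
multiplicities of the exponents `-c`, `c - b₂`, `a` and `a - r₂` then gives, in turn,
`r₁ = 2c`, `b₂ = b₁ + c`, `b₁ = 2c - a` and `r₂ = 3c`.
-/

open LaurentPolynomial Matrix

namespace LaurentPolynomial

variable {R : Type*} [Semiring R]

lemma coeff_multiset_sum_map_T (s : Multiset ℤ) (m : ℤ) :
    ((s.map T).sum : R[T;T⁻¹]).coeff m = s.count m := by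
  induction s using Multiset.induction_on with
  | empty => simp
  | cons n s ih =>
    simp only [Multiset.map_cons, Multiset.sum_cons, AddMonoidAlgebra.coeff_add,
      Finsupp.add_apply, T_apply, ih, Multiset.count_cons, @eq_comm _ n m]
    split_ifs <;> simp [add_comm]

lemma multiset_sum_map_T_injective [CharZero R] :
    Function.Injective fun s : Multiset ℤ ↦ ((s.map T).sum : R[T;T⁻¹]) := by
  intro s t h
  ext m
  simpa [coeff_multiset_sum_map_T] using congrArg (fun p : R[T;T⁻¹] ↦ p.coeff m) h

end LaurentPolynomial

noncomputable def aPlus (r₁ r₂ a b₁ b₂ : ℤ) : Matrix (Fin 2) (Fin 2) ℤ[T;T⁻¹] :=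
  !![1 + T r₁, -T a; -T b₁ - T b₂, 1 + T r₂]

noncomputable def aMinus (r₁ r₂ c : ℤ) : Matrix (Fin 2) (Fin 2) ℤ[T;T⁻¹] :=
  !![1 + T r₁ - T c, 0; 0, 1 + T r₂]

lemma exponent_multisets_eq_of_symplectic {r₁ r₂ a b₁ b₂ c : ℤ}
    (h : aPlus r₁ r₂ a b₁ b₂ * ((aMinus r₁ r₂ c).map invert)ᵀ =
      aMinus r₁ r₂ c * ((aPlus r₁ r₂ a b₁ b₂).map invert)ᵀ) :
    ({-c, r₁ - c} : Multiset ℤ) = {c, c - r₁} ∧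
      ({a, a - r₂, c - b₁, c - b₂} : Multiset ℤ) = {-b₁, -b₂, r₁ - b₁, r₁ - b₂} := by
  have h₀₀ := congrFun₂ h 0 0
  have h₀₁ := congrFun₂ h 0 1
  simp only [aPlus, aMinus, Matrix.mul_apply, of_apply, cons_val', cons_val_fin_one,
    cons_val_zero, cons_val_one, transpose_apply, map_apply, Fin.sum_univ_two, map_sub, map_add,
    map_one, map_neg, map_zero, invert_T, mul_zero, zero_mul, add_zero, zero_add] at h₀₀ h₀₁
  constructor <;> apply multiset_sum_map_T_injective (R := ℤ) <;>
    simp only [Multiset.insert_eq_cons, Multiset.map_cons, Multiset.sum_cons,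
      Multiset.map_singleton, Multiset.sum_singleton, sub_eq_add_neg, T_add]
  · linear_combination -h₀₀
  · linear_combination -h₀₁

theorem Apm_z_5_general (r₁ r₂ a b₁ b₂ c : ℤ)
    (ha : 0 < a) (hb₁ : 0 < b₁) (hb12 : b₁ ≤ b₂)
    (hc : 0 < c)
    (hsymp :
      let Ap : Matrix (Fin 2) (Fin 2) (LaurentPolynomial ℤ) :=
        !![1 + T r₁, -T a; -T b₁ - T b₂, 1 + T r₂]
      let Am : Matrix (Fin 2) (Fin 2) (LaurentPolynomial ℤ) :=
        !![1 + T r₁ - T c, 0; 0, 1 + T r₂]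
      Ap * (Am.map (invert (R := ℤ)))ᵀ = Am * (Ap.map (invert (R := ℤ)))ᵀ) :
    r₁ = 2 * c ∧ r₂ = 3 * c ∧ b₁ = 2 * c - a ∧ b₂ = 3 * c - a := by
  obtain ⟨hdiag, hoff⟩ := exponent_multisets_eq_of_symplectic hsymp
  have hr₁ : r₁ = 2 * c := by
    have := congrArg (Multiset.count (-c)) hdiag
    simp only [Multiset.insert_eq_cons, Multiset.count_cons, Multiset.count_singleton] at this
    split_ifs at this <;> omega
  have hb₂ : b₂ = b₁ + c := by
    have := congrArg (Multiset.count (c - b₂)) hoff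
    simp only [Multiset.insert_eq_cons, Multiset.count_cons, Multiset.count_singleton] at this
    split_ifs at this <;> omega
  have hb₁a : b₁ = 2 * c - a := by
    have := congrArg (Multiset.count a) hoff
    simp only [Multiset.insert_eq_cons, Multiset.count_cons, Multiset.count_singleton] at this
    split_ifs at this <;> omega
  have hr₂ : r₂ = 3 * c := by
    have := congrArg (Multiset.count (a - r₂)) hoff
    simp only [Multiset.insert_eq_cons, Multiset.count_cons, Multiset.count_singleton] at this
    split_ifs at this <;> omega
  exact ⟨hr₁, hr₂, hb₁a, by omega⟩

theorem Apm_z_5 (r₁ r₂ a b₁ b₂ c : ℤ) (hr₁ : 1 ≤ r₁) (hr₂ : 1 ≤ r₂)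
    (ha : 0 < a) (har : a < r₂) (hb₁ : 0 < b₁) (hb₁r : b₁ < r₂)
    (hb₂ : 0 < b₂) (hb₂r : b₂ < r₂) (hb12 : b₁ ≤ b₂)
    (hc : 0 < c) (hcr : c < r₁)
    (hsymp :
      let Ap : Matrix (Fin 2) (Fin 2) (LaurentPolynomial ℤ) :=
        !![1 + T r₁, -T a; -T b₁ - T b₂, 1 + T r₂]
      let Am : Matrix (Fin 2) (Fin 2) (LaurentPolynomial ℤ) :=
        !![1 + T r₁ - T c, 0; 0, 1 + T r₂]
      Ap * (Am.map (invert (R := ℤ)))ᵀ = Am * (Ap.map (invert (R := ℤ)))ᵀ) :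
    r₁ = 2 * c ∧ r₂ = 3 * c ∧ b₁ = 2 * c - a ∧ b₂ = 3 * c - a :=
  Apm_z_5_general r₁ r₂ a b₁ b₂ c ha hb₁ hb12 hc hsymp
end
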